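/- arXiv:1712.07395 — 2 statements merged into one kernel-verified Lean document; each statement's English description precedes it below -/
import Mathlib

section
/- The eigenvalues of H_N^{(1,1)} = −|0⟩⟨0| − |N⟩⟨N| + H_N^walk are exactly −2cos(kπ/(N+1)) for k = 0,...,N; in particular its smallest eigenvalue is −2, achieved by the uniform vector. -/
open Matrix Real Finset

/-- The negative adjacency matrix of the path on vertices `0,…,N`. -/
noncomputable def walkM (N : ℕ) : Matrix (Fin (N+1)) (Fin (N+1)) ℝ :=
  Matrix.of fun i j => if (i:ℕ)+1 = (j:ℕ) ∨ (j:ℕ)+1 = (i:ℕ) then -1 else 0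

/-- `H_N^{(L,R)} = −L|0⟩⟨0| − R|N⟩⟨N| + H_N^walk`. -/
noncomputable def HLR (N : ℕ) (L R : ℝ) : Matrix (Fin (N+1)) (Fin (N+1)) ℝ :=
  walkM N + Matrix.single 0 0 (-L)
    + Matrix.single (Fin.last N) (Fin.last N) (-R)

/-- `μ` is an eigenvalue of the real matrix `M`. -/
def hasEig {n : Type*} [Fintype n] (M : Matrix n n ℝ) (μ : ℝ) : Prop :=
  ∃ v : n → ℝ, v ≠ 0 ∧ M.mulVec v = μ • v

/-!
On a vector `u` indexed by `0, …, N`, `H_N^{(1,1)}` acts as `(H u)_j = -u_{j+1} - u_{j-1}` with the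
reflecting boundary convention `u_{-1} = u_0`, `u_{N+1} = u_N`. The half-integer cosine modes
`u_j = cos ((j + 1/2) θ)` satisfy the bulk recurrence with eigenvalue `-2 cos θ` and the left boundary
condition for every `θ`; the right one holds when `sin ((N + 1) θ) = 0`. The angles
`θ = kπ/(N+1)`, `0 ≤ k ≤ N`, give `N + 1` distinct eigenvalues, and since eigenvectors for distinct
eigenvalues are linearly independent, an `(N+1)`-dimensional space admits no further eigenvalue.
-/

theorem Fin.sum_ite_val_eq {M : Type*} [AddCommMonoid M] {n : ℕ} (f : Fin n → M) (c : ℕ) :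
    ∑ j : Fin n, (if (j : ℕ) = c then f j else 0) = if h : c < n then f ⟨c, h⟩ else 0 := by
  split_ifs with h
  · simp_rw [← Fin.ext_iff (b := ⟨c, h⟩), Finset.sum_ite_eq', Finset.mem_univ, if_true]
  · exact Finset.sum_eq_zero fun j _ => if_neg (by omega)

theorem walkM_mulVec_apply (N : ℕ) (u : Fin (N+1) → ℝ) (i : Fin (N+1)) :
    (walkM N *ᵥ u) i = -(if h : (i : ℕ) + 1 < N + 1 then u ⟨i + 1, h⟩ else 0)
      - (if h : 0 < (i : ℕ) then u ⟨i - 1, by omega⟩ else 0) := by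
  have hsplit : ∀ j : Fin (N+1), walkM N i j * u j =
      -(if (j : ℕ) = i + 1 then u j else 0)
        - (if 0 < (i : ℕ) then if (j : ℕ) = i - 1 then u j else 0 else 0) := by
    intro j
    simp only [walkM, of_apply]
    split_ifs <;> first | omega | ring
  simp only [mulVec, dotProduct, hsplit, Finset.sum_sub_distrib, Finset.sum_neg_distrib,
    Finset.sum_ite_irrel, Finset.sum_const_zero, Fin.sum_ite_val_eq]
  split_ifs <;> first | omega | rfl

-- The truncated `i - 1` and the `min` encode the reflecting boundary.
theorem HLR_one_one_mulVec_apply (N : ℕ) (u : Fin (N+1) → ℝ) (i : Fin (N+1)) :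
    (HLR N 1 1 *ᵥ u) i = -u ⟨min (i + 1) N, by omega⟩ - u ⟨i - 1, by omega⟩ := by
  obtain ⟨i, hi⟩ := i
  simp only [HLR, add_mulVec, Pi.add_apply, walkM_mulVec_apply, single_mulVec,
    Function.update_apply, Fin.ext_iff, Fin.val_last, Fin.val_zero, Pi.zero_apply]
  split_ifs <;> grind

noncomputable def cosMode (N : ℕ) (θ : ℝ) : Fin (N+1) → ℝ := fun j => cos ((j + 1 / 2) * θ)

theorem cos_reflect_of_sin_eq_zero {a : ℝ} (ha : sin a = 0) (b : ℝ) :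
    cos (a + b) = cos (a - b) := by
  rw [cos_add, cos_sub, ha]; ring

theorem HLR_one_one_mulVec_cosMode (N : ℕ) {θ : ℝ} (hθ : sin ((N + 1) * θ) = 0) :
    HLR N 1 1 *ᵥ cosMode N θ = (-2 * cos θ) • cosMode N θ := by
  ext ⟨i, hi⟩
  simp only [HLR_one_one_mulVec_apply, cosMode, Pi.smul_apply, smul_eq_mul]
  have hleft : cos ((((i - 1 : ℕ) : ℝ) + 1 / 2) * θ) = cos (((i : ℝ) - 1 + 1 / 2) * θ) := by
    rcases Nat.eq_zero_or_pos i with rfl | hpos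
    · rw [← cos_neg]; congr 1; push_cast; ring
    · rw [Nat.cast_sub hpos, Nat.cast_one]
  have hright :
      cos ((((min (i + 1) N : ℕ) : ℝ) + 1 / 2) * θ) = cos (((i : ℝ) + 1 + 1 / 2) * θ) := by
    rcases Nat.lt_or_ge i N with hlt | hge
    · rw [min_eq_left hlt, Nat.cast_succ]
    · obtain rfl : i = N := by omega
      rw [min_eq_right (Nat.le_succ i)]
      convert (cos_reflect_of_sin_eq_zero hθ (θ / 2)).symm using 2 <;> ring
  rw [hleft, hright, show ((i : ℝ) + 1 + 1 / 2) * θ = (i + 1 / 2) * θ + θ by ring,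
    show ((i : ℝ) - 1 + 1 / 2) * θ = (i + 1 / 2) * θ - θ by ring, cos_add, cos_sub]
  ring

theorem cosMode_ne_zero (N : ℕ) {θ : ℝ} (hθ : |θ| < π) : cosMode N θ ≠ 0 := by
  intro h
  have h0 := congrFun h 0
  simp only [cosMode, Fin.val_zero, Nat.cast_zero, zero_add, Pi.zero_apply] at h0
  rw [abs_lt] at hθ
  exact (cos_pos_of_mem_Ioo ⟨by linarith, by linarith⟩).ne' h0

theorem hasEig_iff_of_injective {n ι : Type*} [Fintype n] [Fintype ι] (M : Matrix n n ℝ)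
    {ev : ι → ℝ} (hinj : Function.Injective ev) (hcard : Fintype.card n ≤ Fintype.card ι)
    (hev : ∀ i, hasEig M (ev i)) (μ : ℝ) : hasEig M μ ↔ ∃ i, μ = ev i := by
  refine ⟨fun ⟨v, hv, hMv⟩ => ?_, by rintro ⟨i, rfl⟩; exact hev i⟩
  by_contra hμ
  push Not at hμ
  choose w hw hMw using hev
  have hinj' : Function.Injective fun o : Option ι => o.elim μ ev := by
    rintro (_ | a) (_ | b) hab
    exacts [rfl, absurd hab (hμ b), absurd hab.symm (hμ a), congrArg some (hinj hab)]
  have hvec : ∀ o : Option ι,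
      Module.End.HasEigenvector (mulVecLin M) (o.elim μ ev) (o.elim v w) := by
    rintro (_ | i)
    exacts [⟨Module.End.mem_eigenspace_iff.2 hMv, hv⟩,
      ⟨Module.End.mem_eigenspace_iff.2 (hMw i), hw i⟩]
  have := (Module.End.eigenvectors_linearIndependent' _ _ hinj' _ hvec).fintype_card_le_finrank
  rw [Module.finrank_fintype_fun_eq_card, Fintype.card_option] at this
  omega

theorem nat_mul_pi_div_mem_Ico {k N : ℕ} (hk : k ≤ N) : k * π / (N + 1) ∈ Set.Ico 0 π := by
  have hk' : (k : ℝ) < N + 1 := by exact_mod_cast Nat.lt_succ_of_le hk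
  refine ⟨by positivity, ?_⟩
  rw [div_lt_iff₀ (by positivity)]
  nlinarith [pi_pos]

theorem hasEig_HLR_one_one {N k : ℕ} (hk : k ≤ N) :
    hasEig (HLR N 1 1) (-2 * cos (k * π / (N + 1))) := by
  obtain ⟨hθ₀, hθπ⟩ := nat_mul_pi_div_mem_Ico hk
  refine ⟨cosMode N _, cosMode_ne_zero N (by rwa [abs_of_nonneg hθ₀]),
    HLR_one_one_mulVec_cosMode N ?_⟩
  rw [mul_div_cancel₀ _ (by positivity), sin_nat_mul_pi]

theorem injective_neg_two_mul_cos_nat_mul_pi_div (N : ℕ) :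
    Function.Injective fun k : Fin (N + 1) => -2 * cos ((k : ℕ) * π / (N + 1)) := by
  intro a b hab
  have hangle (k : Fin (N + 1)) :=
    Set.Ico_subset_Icc_self (nat_mul_pi_div_mem_Ico (Nat.lt_succ_iff.1 k.isLt))
  have hcos := injOn_cos (hangle a) (hangle b) (by simpa using hab)
  field_simp at hcos
  exact Fin.ext (by exact_mod_cast hcos)

theorem stmt_8_general (N : ℕ) :
    (∀ μ : ℝ, hasEig (HLR N 1 1) μ ↔
      ∃ k : ℕ, k ≤ N ∧ μ = -2 * Real.cos (k * π / (N + 1))) ∧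
    (HLR N 1 1).mulVec (fun _ : Fin (N+1) => (1:ℝ)) = (-2 : ℝ) • (fun _ : Fin (N+1) => (1:ℝ)) ∧
    ∀ μ : ℝ, hasEig (HLR N 1 1) μ → -2 ≤ μ := by
  have hspec (μ : ℝ) :
      hasEig (HLR N 1 1) μ ↔ ∃ k : ℕ, k ≤ N ∧ μ = -2 * cos (k * π / (N + 1)) := by
    rw [hasEig_iff_of_injective _ (injective_neg_two_mul_cos_nat_mul_pi_div N) le_rfl
      (fun k => hasEig_HLR_one_one (Nat.lt_succ_iff.1 k.isLt))]
    simp only [Fin.exists_iff, Nat.lt_succ_iff, exists_prop]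
  refine ⟨hspec, ?_, fun μ hμ => ?_⟩
  · ext i
    norm_num [HLR_one_one_mulVec_apply]
  · obtain ⟨k, -, rfl⟩ := (hspec μ).1 hμ
    linarith [cos_le_one (k * π / (N + 1))]

/-- The eigenvalues of `H_N^{(1,1)} = −|0⟩⟨0| − |N⟩⟨N| + H_N^walk` are exactly
`−2 cos (kπ/(N+1))` for `k = 0,…,N`; in particular the smallest eigenvalue is
`−2`, achieved by the uniform vector. -/
theorem stmt_8 (N : ℕ) (hN : 1 ≤ N) :
    (∀ μ : ℝ, hasEig (HLR N 1 1) μ ↔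
      ∃ k : ℕ, k ≤ N ∧ μ = -2 * Real.cos (k * π / (N + 1))) ∧
    (HLR N 1 1).mulVec (fun _ : Fin (N+1) => (1:ℝ)) = (-2 : ℝ) • (fun _ : Fin (N+1) => (1:ℝ)) ∧
    ∀ μ : ℝ, hasEig (HLR N 1 1) μ → -2 ≤ μ :=
  stmt_8_general N
end

section
/- For R > 1, the matrix H_N^{(0,R)} = −R|N⟩⟨N| + H_N^walk has exactly one eigenvalue strictly below −2, and this eigenvalue converges to −(R + 1/R) as N → ∞; all other eigenvalues lie in [−2, 2]. -/
/-!
Row by row, an eigenvector of `H_N^{(0,R)}` with eigenvalue `μ` obeys the transfer recurrence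
`u (n+2) = -μ u (n+1) - u n` started from `u 0 = 0`, so it is determined by `μ`, and `μ` is an
eigenvalue iff a single boundary condition holds at vertex `N`.

For `μ ≤ -2` the recurrence has a positive increasing solution; two positive eigenvectors of a
symmetric matrix are never orthogonal, so there is at most one eigenvalue `≤ -2`. For `μ > 2` the
solution alternates in sign with increasing modulus, which the boundary condition forbids.

Writing `μ = -(x + x⁻¹)`, the boundary condition reads `(R - x) x^(N+1) = (R - x⁻¹) x^-(N+1)`.
For `1 < a < R` its two sides compare one way at `x = a` once `N` is large and the other way at
`x = R`, so it has a root in `[a, R]`; since `|x + x⁻¹ - (R + R⁻¹)| ≤ R - x` there, the eigenvalue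
tends to `-(R + R⁻¹)`.
-/

open Matrix Real Finset

/-- Shifted by one: `transferSeq μ (i + 1)` is the entry at vertex `i`, and the fictitious vertex
`-1` carries `transferSeq μ 0 = 0`. In Chebyshev terms, `transferSeq μ n = U_{n-1}(-μ/2)`. -/
noncomputable def transferSeq (μ : ℝ) : ℕ → ℝ
  | 0 => 0
  | 1 => 1
  | n + 2 => -μ * transferSeq μ (n + 1) - transferSeq μ n

@[simp] lemma transferSeq_zero (μ : ℝ) : transferSeq μ 0 = 0 := rfl

@[simp] lemma transferSeq_one (μ : ℝ) : transferSeq μ 1 = 1 := rfl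

lemma transferSeq_add_two (μ : ℝ) (n : ℕ) :
    transferSeq μ (n + 2) = -μ * transferSeq μ (n + 1) - transferSeq μ n := rfl

lemma eq_mul_transferSeq_of_recurrence {μ : ℝ} {N : ℕ} {u : ℕ → ℝ} (h0 : u 0 = 0)
    (hrec : ∀ n < N, u (n + 2) = -μ * u (n + 1) - u n) :
    ∀ n ≤ N + 1, u n = u 1 * transferSeq μ n := by
  intro n
  induction n using Nat.twoStepInduction with
  | zero => simp [h0]
  | one => simp
  | more n ih₀ ih₁ =>
    intro hn
    rw [hrec n (by omega), ih₀ (by omega), ih₁ (by omega), transferSeq_add_two]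
    ring

lemma transferSeq_neg (μ : ℝ) (n : ℕ) :
    transferSeq (-μ) n = (-1) ^ (n + 1) * transferSeq μ n := by
  induction n using Nat.twoStepInduction with
  | zero => simp
  | one => simp
  | more n ih₀ ih₁ =>
    rw [transferSeq_add_two, transferSeq_add_two, ih₀, ih₁]
    ring

lemma transferSeq_nonneg_and_lt_succ {μ : ℝ} (hμ : μ ≤ -2) (n : ℕ) :
    0 ≤ transferSeq μ n ∧ transferSeq μ n < transferSeq μ (n + 1) := by
  induction n with
  | zero => simp
  | succ n ih =>
    obtain ⟨hnonneg, hlt⟩ := ih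
    refine ⟨by linarith, ?_⟩
    rw [transferSeq_add_two]
    nlinarith

lemma transferSeq_succ_pos {μ : ℝ} (hμ : μ ≤ -2) (n : ℕ) : 0 < transferSeq μ (n + 1) := by
  obtain ⟨hnonneg, hlt⟩ := transferSeq_nonneg_and_lt_succ hμ n
  linarith

lemma sub_inv_mul_transferSeq {x : ℝ} (hx : x ≠ 0) (n : ℕ) :
    (x - x⁻¹) * transferSeq (-(x + x⁻¹)) n = x ^ n - x⁻¹ ^ n := by
  induction n using Nat.twoStepInduction with
  | zero => simp
  | one => simp
  | more n ih₀ ih₁ =>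
    rw [transferSeq_add_two]
    linear_combination (x + x⁻¹) * ih₁ - ih₀ + (x ^ n - x⁻¹ ^ n) * mul_inv_cancel₀ hx

/-- `v` moved one step to the right, with zeros attached at both ends of the path, so that the
row equations of `walkM N` hold without boundary cases. -/
def pad {N : ℕ} (v : Fin (N + 1) → ℝ) : ℕ → ℝ
  | 0 => 0
  | n + 1 => if h : n < N + 1 then v ⟨n, h⟩ else 0

@[simp] lemma pad_zero {N : ℕ} (v : Fin (N + 1) → ℝ) : pad v 0 = 0 := rfl

@[simp] lemma pad_succ {N : ℕ} (v : Fin (N + 1) → ℝ) (i : Fin (N + 1)) :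
    pad v (i + 1) = v i := by
  simp [pad, i.isLt]

@[simp] lemma pad_add_two {N : ℕ} (v : Fin (N + 1) → ℝ) : pad v (N + 2) = 0 := by
  simp [pad]

lemma pad_comp_succ {N : ℕ} {f : ℕ → ℝ} (hf : f 0 = 0) {n : ℕ} (hn : n ≤ N + 1) :
    pad (fun i : Fin (N + 1) => f (i + 1)) n = f n := by
  cases n with
  | zero => simp [hf]
  | succ n => simp [pad, show n < N + 1 by omega]

lemma sum_ite_val_add_one_eq_pad {N : ℕ} (v : Fin (N + 1) → ℝ) (n : ℕ) :
    ∑ j : Fin (N + 1), (if (j : ℕ) + 1 = n then v j else 0) = pad v n := by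
  cases n with
  | zero => simp
  | succ n =>
    by_cases hn : n < N + 1
    · have hval : ∀ j : Fin (N + 1), (j : ℕ) = n ↔ j = ⟨n, hn⟩ := fun j => by rw [Fin.ext_iff]
      simp [pad, hn, hval]
    · rw [pad, dif_neg hn]
      exact sum_eq_zero fun j _ => if_neg (by omega)

lemma walkM_isSymm (N : ℕ) : (walkM N).IsSymm :=
  IsSymm.ext fun i j => by simp only [walkM, of_apply, or_comm]

lemma HLR_isSymm (N : ℕ) (L R : ℝ) : (HLR N L R).IsSymm :=
  ((walkM_isSymm N).add (transpose_single _ _ _)).add (transpose_single _ _ _)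

lemma walkM_mulVec_apply_s14 {N : ℕ} (v : Fin (N + 1) → ℝ) (i : Fin (N + 1)) :
    (walkM N *ᵥ v) i = -pad v i - pad v (i + 2) := by
  have hentry : ∀ j, walkM N i j * v j =
      -(if (j : ℕ) + 1 = i then v j else 0) - (if (j : ℕ) + 1 = i + 2 then v j else 0) := by
    intro j
    simp only [walkM, of_apply]
    split_ifs <;> first | omega | ring
  simp only [mulVec, dotProduct, hentry, sum_sub_distrib, sum_neg_distrib,
    sum_ite_val_add_one_eq_pad]

lemma HLR_mulVec_apply {N : ℕ} (R : ℝ) (v : Fin (N + 1) → ℝ) (i : Fin (N + 1)) :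
    (HLR N 0 R *ᵥ v) i =
      -pad v i - pad v (i + 2) - if i = Fin.last N then R * v i else 0 := by
  rw [HLR, neg_zero, single_zero, add_zero, add_mulVec, Pi.add_apply, walkM_mulVec_apply_s14,
    single_mulVec]
  split_ifs with h
  · simp [h, sub_eq_add_neg]
  · simp [h]

noncomputable def transferVec (N : ℕ) (μ : ℝ) : Fin (N + 1) → ℝ :=
  fun i => transferSeq μ (i + 1)

lemma HLR_mulVec_transferVec {N : ℕ} {R μ : ℝ}
    (h : transferSeq μ N + (μ + R) * transferSeq μ (N + 1) = 0) :
    HLR N 0 R *ᵥ transferVec N μ = μ • transferVec N μ := by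
  have hpad : ∀ n ≤ N + 1, pad (transferVec N μ) n = transferSeq μ n :=
    fun n hn => pad_comp_succ (transferSeq_zero μ) hn
  funext i
  rw [HLR_mulVec_apply, Pi.smul_apply, smul_eq_mul, hpad i (by omega)]
  split_ifs with hi
  · subst hi
    simp only [transferVec, Fin.val_last, pad_add_two]
    linear_combination -h
  · have hiN : (i : ℕ) < N := Fin.val_lt_last hi
    rw [hpad (i + 2) (by omega), transferVec, transferSeq_add_two]
    ring

theorem hasEig_HLR_iff (N : ℕ) (R μ : ℝ) :
    hasEig (HLR N 0 R) μ ↔ transferSeq μ N + (μ + R) * transferSeq μ (N + 1) = 0 := by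
  refine ⟨fun ⟨v, hv0, hv⟩ => ?_,
    fun h => ⟨transferVec N μ, fun h0 => ?_, HLR_mulVec_transferVec h⟩⟩
  · have hrow : ∀ i : Fin (N + 1), -pad v i - pad v (i + 2)
        - (if i = Fin.last N then R * v i else 0) = μ * pad v (i + 1) := fun i => by
      rw [← HLR_mulVec_apply, hv, Pi.smul_apply, smul_eq_mul, pad_succ]
    have hshape : ∀ n ≤ N + 1, pad v n = pad v 1 * transferSeq μ n := by
      refine eq_mul_transferSeq_of_recurrence (pad_zero v) fun n hn => ?_
      have := hrow ⟨n, by omega⟩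
      rw [if_neg (Fin.ne_of_val_ne (by simp; omega))] at this
      linear_combination -this
    have hpad1 : pad v 1 ≠ 0 := fun h1 => hv0 <| funext fun i => by
      rw [← pad_succ v i, hshape _ (by omega), h1, zero_mul, Pi.zero_apply]
    have hlast := hrow (Fin.last N)
    rw [if_pos rfl, ← pad_succ v (Fin.last N), Fin.val_last, pad_add_two, hshape N (by omega),
      hshape (N + 1) le_rfl] at hlast
    exact (mul_eq_zero.1 (by linear_combination -hlast)).resolve_left hpad1
  · simpa [transferVec] using congrFun h0 0

lemma dotProduct_eq_zero_of_isSymm {n K : Type*} [Fintype n] [CommRing K] [NoZeroDivisors K]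
    {A : Matrix n n K} (hA : A.IsSymm) {v w : n → K} {μ ν : K}
    (hv : A *ᵥ v = μ • v) (hw : A *ᵥ w = ν • w) (hμν : μ ≠ ν) : v ⬝ᵥ w = 0 := by
  have h : μ * (v ⬝ᵥ w) = ν * (v ⬝ᵥ w) :=
    calc μ * (v ⬝ᵥ w) = (A *ᵥ v) ⬝ᵥ w := by rw [hv, smul_dotProduct, smul_eq_mul]
      _ = v ⬝ᵥ (A *ᵥ w) := by rw [dotProduct_mulVec, ← vecMul_transpose, hA.eq]
      _ = ν * (v ⬝ᵥ w) := by rw [hw, dotProduct_smul, smul_eq_mul]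
  exact (mul_eq_mul_right_iff.1 h).resolve_left hμν

/-- The eigenvectors `transferVec N μ`, `transferVec N ν` are positive, so they are not
orthogonal. -/
theorem eq_of_hasEig_HLR_of_le_neg_two {N : ℕ} {R μ ν : ℝ}
    (hμ : hasEig (HLR N 0 R) μ) (hμ2 : μ ≤ -2) (hν : hasEig (HLR N 0 R) ν) (hν2 : ν ≤ -2) :
    μ = ν := by
  by_contra hne
  have horth := dotProduct_eq_zero_of_isSymm (HLR_isSymm N 0 R)
    (HLR_mulVec_transferVec ((hasEig_HLR_iff N R μ).1 hμ))
    (HLR_mulVec_transferVec ((hasEig_HLR_iff N R ν).1 hν)) hne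
  have hpos : 0 < transferVec N μ ⬝ᵥ transferVec N ν :=
    sum_pos (fun i _ => mul_pos (transferSeq_succ_pos hμ2 i) (transferSeq_succ_pos hν2 i))
      univ_nonempty
  exact hpos.ne' horth

theorem le_two_of_hasEig_HLR {N : ℕ} {R μ : ℝ} (hR : -1 ≤ R) (hμ : hasEig (HLR N 0 R) μ) :
    μ ≤ 2 := by
  by_contra! hμ2
  obtain ⟨hnonneg, hlt⟩ := transferSeq_nonneg_and_lt_succ (μ := -μ) (by linarith) N
  have hcond := (hasEig_HLR_iff N R μ).1 hμ
  have hkey : transferSeq (-μ) N = (μ + R) * transferSeq (-μ) (N + 1) := by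
    rw [transferSeq_neg, transferSeq_neg]
    linear_combination (-1) ^ (N + 1) * hcond
  nlinarith

/-- `(x - x⁻¹)` times the boundary condition of `hasEig_HLR_iff` at `μ = -(x + x⁻¹)`, in closed
form (`sub_inv_mul_boundary_eq_secular`). -/
noncomputable def secular (N : ℕ) (R x : ℝ) : ℝ :=
  (R - x) * x ^ (N + 1) - (R - x⁻¹) * x⁻¹ ^ (N + 1)

lemma sub_inv_mul_boundary_eq_secular {x : ℝ} (hx : x ≠ 0) (N : ℕ) (R : ℝ) :
    (x - x⁻¹) * (transferSeq (-(x + x⁻¹)) N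
      + (-(x + x⁻¹) + R) * transferSeq (-(x + x⁻¹)) (N + 1)) = secular N R x := by
  have h₀ := sub_inv_mul_transferSeq hx N
  have h₁ := sub_inv_mul_transferSeq hx (N + 1)
  rw [secular]
  linear_combination h₀ + (R - x - x⁻¹) * h₁ - (x ^ N - x⁻¹ ^ N) * mul_inv_cancel₀ hx

lemma hasEig_HLR_of_secular_eq_zero {N : ℕ} {R x : ℝ} (hx : 1 < x) (h : secular N R x = 0) :
    hasEig (HLR N 0 R) (-(x + x⁻¹)) := by
  rw [hasEig_HLR_iff]
  have hsub : x - x⁻¹ ≠ 0 := sub_ne_zero.2 (ne_of_gt (inv_lt_one_of_one_lt₀ hx |>.trans hx))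
  exact (mul_eq_zero.1 ((sub_inv_mul_boundary_eq_secular (by positivity) N R).trans h)).resolve_left
    hsub

lemma secular_self_neg {R : ℝ} (hR : 1 < R) (N : ℕ) : secular N R R < 0 := by
  have hinv : R⁻¹ < R := inv_lt_one_of_one_lt₀ hR |>.trans hR
  have : 0 < (R - R⁻¹) * R⁻¹ ^ (N + 1) := mul_pos (by linarith) (by positivity)
  simp only [secular, sub_self, zero_mul, zero_sub]
  linarith

lemma exists_secular_pos {R a : ℝ} (ha : 1 < a) (haR : a < R) :
    ∃ N₀ : ℕ, ∀ N, N₀ ≤ N → 0 < secular N R a := by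
  obtain ⟨N₀, hN₀⟩ := pow_unbounded_of_one_lt ((R - a⁻¹) / (R - a)) ha
  refine ⟨N₀, fun N hN => ?_⟩
  have hinv : a⁻¹ < 1 := inv_lt_one_of_one_lt₀ ha
  have hpow : a ^ N₀ ≤ a ^ (N + 1) := pow_le_pow_right₀ ha.le (by omega)
  have hbig : R - a⁻¹ < (R - a) * a ^ (N + 1) := by
    rw [div_lt_iff₀ (by linarith)] at hN₀
    nlinarith
  have hsmall : a⁻¹ ^ (N + 1) ≤ 1 := pow_le_one₀ (by positivity) hinv.le
  have : (R - a⁻¹) * a⁻¹ ^ (N + 1) ≤ R - a⁻¹ := by nlinarith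
  rw [secular]
  linarith

lemma exists_hasEig_HLR_near {R a : ℝ} (ha : 1 < a) (haR : a < R) :
    ∃ N₀ : ℕ, ∀ N, N₀ ≤ N → ∃ x ∈ Set.Icc a R, hasEig (HLR N 0 R) (-(x + x⁻¹)) := by
  obtain ⟨N₀, hN₀⟩ := exists_secular_pos ha haR
  refine ⟨N₀, fun N hN => ?_⟩
  have hcont : ContinuousOn (secular N R) (Set.Icc a R) := by
    refine (by fun_prop : Continuous fun x => (R - x) * x ^ (N + 1)).continuousOn.sub
      ((continuousOn_const.sub ?_).mul (ContinuousOn.pow ?_ _))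
      <;> exact continuousOn_inv₀.mono fun x hx => (by linarith [hx.1] : (0 : ℝ) < x).ne'
  obtain ⟨x, hx, hroot⟩ := intermediate_value_Icc' haR.le hcont
    ⟨(secular_self_neg (ha.trans haR) N).le, (hN₀ N hN).le⟩
  exact ⟨x, hx, hasEig_HLR_of_secular_eq_zero (ha.trans_le hx.1) hroot⟩

lemma neg_add_inv_lt_neg_two {x : ℝ} (hx : 1 < x) : -(x + x⁻¹) < -2 := by
  have hpos : 0 < x := by linarith
  have : x + x⁻¹ - 2 = (x - 1) ^ 2 / x := by field_simp; ring
  have : 0 < (x - 1) ^ 2 / x := div_pos (by nlinarith) hpos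
  linarith

lemma abs_neg_add_inv_add_le {x R : ℝ} (hx : 1 ≤ x) (hxR : x ≤ R) :
    |-(x + x⁻¹) + (R + R⁻¹)| ≤ R - x := by
  have hanti : R⁻¹ ≤ x⁻¹ := inv_anti₀ (by linarith) hxR
  have hgap : x⁻¹ - R⁻¹ ≤ R - x := by
    rw [inv_sub_inv (by linarith) (by linarith), div_le_iff₀ (by nlinarith)]
    nlinarith [mul_nonneg (sub_nonneg.2 hxR) (by nlinarith : (0 : ℝ) ≤ x * R - 1)]
  rw [abs_le]
  constructor <;> linarith

/-- For `R > 1` and all large enough `N`, the matrix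
`H_N^{(0,R)} = −R|N⟩⟨N| + H_N^walk` has exactly one eigenvalue strictly below
`−2`, all its other eigenvalues lie in `[−2, 2]`, and as `N → ∞` the
below-`−2` eigenvalue converges to `−(R + 1/R)`. -/
theorem stmt_14 (R : ℝ) (hR : 1 < R) :
    (∃ N₁ : ℕ, ∀ N : ℕ, N₁ ≤ N →
      (∃! μ : ℝ, hasEig (HLR N 0 R) μ ∧ μ < -2) ∧
      ∀ μ : ℝ, hasEig (HLR N 0 R) μ → ¬ μ < -2 → μ ∈ Set.Icc (-2 : ℝ) 2) ∧
    ∀ ε : ℝ, 0 < ε → ∃ N₀ : ℕ, ∀ N : ℕ, N₀ ≤ N →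
      ∀ μ : ℝ, hasEig (HLR N 0 R) μ → μ < -2 → |μ + (R + 1/R)| < ε := by
  have hunique {N : ℕ} {μ ν : ℝ} (hμ : hasEig (HLR N 0 R) μ ∧ μ < -2)
      (hν : hasEig (HLR N 0 R) ν ∧ ν < -2) : μ = ν :=
    eq_of_hasEig_HLR_of_le_neg_two hμ.1 hμ.2.le hν.1 hν.2.le
  refine ⟨?_, fun ε hε => ?_⟩
  · obtain ⟨N₁, hN₁⟩ :=
      exists_hasEig_HLR_near (R := R) (a := (1 + R) / 2) (by linarith) (by linarith)
    refine ⟨N₁, fun N hN => ⟨?_, fun μ hμ hμ2 =>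
      ⟨not_lt.1 hμ2, le_two_of_hasEig_HLR (by linarith) hμ⟩⟩⟩
    obtain ⟨x, hx, hxeig⟩ := hN₁ N hN
    have hbelow : hasEig (HLR N 0 R) (-(x + x⁻¹)) ∧ -(x + x⁻¹) < -2 :=
      ⟨hxeig, neg_add_inv_lt_neg_two (by linarith [hx.1])⟩
    exact ⟨_, hbelow, fun ν hν => hunique hν hbelow⟩
  · obtain ⟨N₀, hN₀⟩ := exists_hasEig_HLR_near (R := R) (a := max ((1 + R) / 2) (R - ε / 2))
      (lt_max_of_lt_left (by linarith)) (max_lt (by linarith) (by linarith))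
    refine ⟨N₀, fun N hN μ hμ hμ2 => ?_⟩
    obtain ⟨x, ⟨hax, hxR⟩, hxeig⟩ := hN₀ N hN
    have hx1 : 1 < x := by linarith [le_max_left ((1 + R) / 2) (R - ε / 2)]
    rw [hunique ⟨hμ, hμ2⟩ ⟨hxeig, neg_add_inv_lt_neg_two hx1⟩, one_div]
    calc |-(x + x⁻¹) + (R + R⁻¹)| ≤ R - x := abs_neg_add_inv_add_le hx1.le hxR
      _ < ε := by linarith [le_max_right ((1 + R) / 2) (R - ε / 2)]
end
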